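/- arXiv:2402.05599 — 3 statements merged into one kernel-verified Lean document; each statement's English description precedes it below -/
import Mathlib

section
/- Let p be an odd prime, let a ∈ 𝔽_p with a ≠ 0, and let S = {(x, y) ∈ 𝔽_p × 𝔽_p : y² = a·x² + 1} with the addition law (x₁, y₁) + (x₂, y₂) = (x₁y₂ + y₁x₂, y₁y₂ + a·x₁x₂). Then S is cyclic under this operation: there exists g ∈ S such that every element of S is obtained from the identity (0, 1) by finitely many additions of g, i.e., for every Q ∈ S there exists k ∈ ℕ with Q = ((·) + g)^[k] (0, 1). Moreover the number of elements of S equals p − (a/p), where (a/p) is the Legendre symbol of any integer lift of a. -/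
/-!
The pair `(x, y)` is the element `y + x √a` of the quadratic algebra `𝔽_p[√a]`: the addition law
is multiplication there, and `S` is the group of elements of norm `y² - a x² = 1`. Sending `√a` to
a square root `r ≠ 0` of `a` in an algebraic closure is injective on this group, since the image
of `z` also fixes the image of its inverse, the conjugate `z̄`, hence the trace `z + z̄ = 2 re z`
and then `im z`. So the group is a finite subgroup of the multiplicative group of a field, hence
cyclic.

For the count, the number of `y` with `y² = c` is `1 + χ c`, so `#S = p + ∑ₓ χ (a x² + 1)`.
Grouping `x` by `t = x²` turns the sum into `∑ₜ (1 + χ t) χ (a t + 1)`; the first half vanishes,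
and for `t ≠ 0` one has `χ t χ (a t + 1) = χ (a + t⁻¹)`, whose sum over all `t` vanishes as well,
leaving only the missing term `-χ a` at `t = 0`.
-/

open Finset

section CharacterSums

variable {F : Type*} [Field F] [Fintype F] [DecidableEq F]

theorem sum_quadraticChar_mul_add_one (hF : ringChar F ≠ 2) {a : F} (ha : a ≠ 0) :
    ∑ t : F, quadraticChar F (a * t + 1) = 0 := by
  rw [← quadraticChar_sum_zero hF]
  exact Fintype.sum_equiv ((Equiv.mulLeft₀ a ha).trans (Equiv.addRight 1)) _ _ fun _ => rfl

theorem sum_quadraticChar_mul_quadraticChar_mul_add_one (hF : ringChar F ≠ 2) (a : F) :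
    ∑ t : F, quadraticChar F t * quadraticChar F (a * t + 1) = -quadraticChar F a := by
  have hterm (t : F) : quadraticChar F t * quadraticChar F (a * t + 1)
      = quadraticChar F (a + t⁻¹) - if t = 0 then quadraticChar F a else 0 := by
    rcases eq_or_ne t 0 with rfl | ht
    · simp
    rw [if_neg ht, sub_zero, ← map_mul, ← one_mul (quadraticChar F (a + t⁻¹)),
      ← quadraticChar_sq_one' ht, ← map_mul]
    congr 1
    field_simp
  have hinv : ∑ t : F, quadraticChar F (a + t⁻¹) = 0 := by
    rw [← quadraticChar_sum_zero hF]
    exact Fintype.sum_equiv ((Equiv.inv F).trans (Equiv.addLeft a)) _ _ fun _ => rfl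
  simp only [hterm, sum_sub_distrib, hinv, sum_ite_eq', mem_univ, if_true, zero_sub]

theorem sum_quadraticChar_mul_sq_add_one (hF : ringChar F ≠ 2) {a : F} (ha : a ≠ 0) :
    ∑ x : F, quadraticChar F (a * x ^ 2 + 1) = -quadraticChar F a := by
  have hfib : ∑ x : F, quadraticChar F (a * x ^ 2 + 1)
      = ∑ t : F, (quadraticChar F t + 1) * quadraticChar F (a * t + 1) := by
    rw [← sum_fiberwise_of_maps_to' (g := fun x : F => x ^ 2) (t := univ)
      (fun _ _ => mem_univ _) fun t => quadraticChar F (a * t + 1)]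
    refine sum_congr rfl fun t _ => ?_
    rw [sum_const, nsmul_eq_mul, ← quadraticChar_card_sqrts hF t, Set.toFinset_ofPred]
  simp only [hfib, add_mul, one_mul, sum_add_distrib,
    sum_quadraticChar_mul_quadraticChar_mul_add_one hF, sum_quadraticChar_mul_add_one hF ha,
    add_zero]

theorem card_filter_sq_eq_mul_sq_add_one (hF : ringChar F ≠ 2) {a : F} (ha : a ≠ 0) :
    (#{P : F × F | P.2 ^ 2 = a * P.1 ^ 2 + 1} : ℤ) = Fintype.card F - quadraticChar F a := by
  have hslice : #{P : F × F | P.2 ^ 2 = a * P.1 ^ 2 + 1}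
      = ∑ x : F, #{y : F | y ^ 2 = a * x ^ 2 + 1} := by
    simp only [card_filter, Fintype.sum_prod_type]
  have hsqrts (x : F) : (#{y : F | y ^ 2 = a * x ^ 2 + 1} : ℤ)
      = quadraticChar F (a * x ^ 2 + 1) + 1 := by
    rw [← quadraticChar_card_sqrts hF, Set.toFinset_ofPred]
  rw [hslice, Nat.cast_sum]
  simp only [hsqrts, sum_add_distrib, sum_quadraticChar_mul_sq_add_one hF ha, sum_const,
    card_univ, nsmul_eq_mul, mul_one]
  ring

end CharacterSums

namespace QuadraticAlgebra

instance {R : Type*} [Finite R] {a b : R} : Finite (QuadraticAlgebra R a b) :=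
  .of_equiv _ (equivProd a b).symm

variable {F : Type*} [Field F] {a : F}

theorem injOn_lift_unitary {K : Type*} [Field K] [Algebra F K] (hF : ringChar F ≠ 2)
    (ha : a ≠ 0) (r : K) (hr : r * r = a • 1 + (0 : F) • r) :
    Set.InjOn (lift ⟨r, hr⟩) (unitary (QuadraticAlgebra F a 0)) := by
  set φ := lift (A := K) ⟨r, hr⟩
  have hφstar {z : QuadraticAlgebra F a 0} (hz : z ∈ unitary _) : φ (star z) = (φ z)⁻¹ :=
    eq_inv_of_mul_eq_one_right (by rw [← map_mul, Unitary.mul_star_self_of_mem hz, map_one])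
  intro z hz w hw hzw
  have htrace : trace z = trace w := by
    apply (algebraMap F K).injective
    rw [← φ.commutes, ← φ.commutes, algebraMap_trace_eq_add_star, algebraMap_trace_eq_add_star,
      map_add, map_add, hφstar hz, hφstar hw, hzw]
  have hre : z.re = w.re := by
    simpa [trace_def, Ring.two_ne_zero hF] using htrace
  have hr0 : r ≠ 0 := by
    rintro rfl
    refine ha ((algebraMap F K).injective ?_)
    simpa [Algebra.smul_def] using hr.symm
  have him : z.im = w.im := by
    apply smul_left_injective F hr0
    simpa [φ, lift_apply_apply, hre] using hzw
  exact QuadraticAlgebra.ext hre him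

theorem isCyclic_unitary [Finite F] (hF : ringChar F ≠ 2) (ha : a ≠ 0) :
    IsCyclic (unitary (QuadraticAlgebra F a 0)) := by
  obtain ⟨r, hr⟩ := IsAlgClosed.exists_eq_mul_self (algebraMap F (AlgebraicClosure F) a)
  have hr' : r * r = a • 1 + (0 : F) • r := by simp [hr, Algebra.smul_def]
  exact isCyclic_of_injective_ringHom
    ((lift ⟨r, hr'⟩).toMonoidHom.comp (unitary _).subtype)
    (injOn_lift_unitary hF ha r hr').injective

def ofPair (P : F × F) : QuadraticAlgebra F a 0 := ⟨P.2, P.1⟩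

theorem ofPair_injective : Function.Injective (ofPair (a := a)) :=
  fun _ _ h => Prod.ext (congrArg im h) (congrArg re h)

theorem ofPair_zero_one : ofPair (a := a) (0, 1) = 1 := rfl

theorem ofPair_mul (P Q : F × F) :
    ofPair (a := a) (P.1 * Q.2 + P.2 * Q.1, P.2 * Q.2 + a * P.1 * Q.1) = ofPair P * ofPair Q := by
  ext <;> simp only [ofPair, re_mul, im_mul]
  ring

theorem ofPair_mem_unitary_iff (P : F × F) :
    ofPair P ∈ unitary (QuadraticAlgebra F a 0) ↔ P.2 ^ 2 = a * P.1 ^ 2 + 1 := by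
  rw [← norm_eq_one_iff_mem_unitary, norm_def, ofPair]
  exact ⟨fun h => by linear_combination h, fun h => by linear_combination h⟩

end QuadraticAlgebra

open QuadraticAlgebra in
/-- For an odd prime `p` and nonzero `a ∈ 𝔽_p`, the solution set
`S = {(x,y) : y² = a·x² + 1}` with the addition law is cyclic: some `g ∈ S` generates
every element of `S` from the identity `(0,1)` by iterated addition. Moreover
`|S| = p − (a/p)`, the Legendre symbol being taken of any integer lift of `a`. -/
theorem quadratic_group_cyclic_card (p : ℕ) [Fact p.Prime] (hp : p ≠ 2)
    (a : ZMod p) (ha : a ≠ 0) :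
    let add : ZMod p × ZMod p → ZMod p × ZMod p → ZMod p × ZMod p :=
      fun P Q => (P.1 * Q.2 + P.2 * Q.1, P.2 * Q.2 + a * P.1 * Q.1)
    let S : Finset (ZMod p × ZMod p) :=
      Finset.univ.filter (fun P : ZMod p × ZMod p => P.2 ^ 2 = a * P.1 ^ 2 + 1)
    (∃ g ∈ S, ∀ Q ∈ S, ∃ k : ℕ,
        Q = (fun P => add P g)^[k] ((0 : ZMod p), (1 : ZMod p))) ∧
    (∀ b : ℤ, (b : ZMod p) = a → (S.card : ℤ) = (p : ℤ) - legendreSym p b) := by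
  intro add S
  have hF : ringChar (ZMod p) ≠ 2 := by rwa [ZMod.ringChar_zmod_n]
  have hmem (P : ZMod p × ZMod p) :
      P ∈ S ↔ ofPair P ∈ unitary (QuadraticAlgebra (ZMod p) a 0) := by
    simp [S, ofPair_mem_unitary_iff]
  have hiter (g : ZMod p × ZMod p) (k : ℕ) :
      ofPair ((fun P => add P g)^[k] (0, 1)) = ofPair (a := a) g ^ k := by
    induction k with
    | zero => exact ofPair_zero_one
    | succ k ih => rw [Function.iterate_succ_apply', pow_succ, ← ih]; exact ofPair_mul _ _
  refine ⟨?_, fun b hb => ?_⟩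
  · have := isCyclic_unitary hF ha
    obtain ⟨γ, hγ⟩ := IsCyclic.exists_monoid_generator (α := unitary (QuadraticAlgebra _ a 0))
    refine ⟨(γ.1.im, γ.1.re), (hmem _).2 γ.2, fun Q hQ => ?_⟩
    obtain ⟨k, hk⟩ := hγ ⟨ofPair Q, (hmem Q).1 hQ⟩
    refine ⟨k, ofPair_injective (a := a) ?_⟩
    rw [hiter]
    exact congrArg Subtype.val hk.symm
  · rw [legendreSym, hb, card_filter_sq_eq_mul_sq_add_one hF ha, ZMod.card]
end

section
/- Let a be a positive integer with a ≡ 3 (mod 4) and let n be an odd positive integer. Then the Jacobi symbol satisfies (a/(n + 2a)) = −(a/n). -/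
/-- For a positive integer `a ≡ 3 (mod 4)` and an odd positive integer `n`,
the Jacobi symbol satisfies `(a/(n + 2a)) = −(a/n)`. -/
theorem jacobi_antiperiodic_three_mod_four (a : ℕ) (ha : 0 < a) (ha3 : a % 4 = 3)
    (n : ℕ) (hn : Odd n) (hn0 : 0 < n) :
    jacobiSym (a : ℤ) (n + 2 * a) = - jacobiSym (a : ℤ) n := by
  have haodd : Odd a := Nat.odd_iff.mpr (by omega)
  have hnum : jacobiSym ((n + 2 * a : ℕ) : ℤ) a = jacobiSym ((n : ℕ) : ℤ) a := by
    have : ((n + 2 * a : ℕ) : ℤ) % (a : ℤ) = ((n : ℕ) : ℤ) % (a : ℤ) := by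
      push_cast; rw [mul_comm, Int.add_mul_emod_self_left]
    rw [jacobiSym.mod_left, this, ← jacobiSym.mod_left]
  rcases Nat.odd_mod_four_iff.mp (Nat.odd_iff.mp hn) with h1 | h3
  · have h2 : (n + 2 * a) % 4 = 3 := by omega
    rw [jacobiSym.quadratic_reciprocity_three_mod_four ha3 h2,
      jacobiSym.quadratic_reciprocity_one_mod_four' haodd h1, hnum]
  · have h2 : (n + 2 * a) % 4 = 1 := by omega
    rw [jacobiSym.quadratic_reciprocity_one_mod_four' haodd h2,
      jacobiSym.quadratic_reciprocity_three_mod_four ha3 h3, hnum, neg_neg]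
end

section
/- Let a be a positive integer with a ≡ 3 (mod 4). Then, in ℂ, Σ over odd n with 1 ≤ n ≤ 2a−1 of (a/n)·exp(πi·n/(2a)) equals −i · Σ_{m=1}^{a−1} (m/a)·exp(2πi·m/a), where (·/·) denotes the Jacobi symbol. (In particular, for a prime p ≡ 3 (mod 4) the left-hand side equals −i·G_p = √p.) -/
open Finset Complex Function
open scoped Real

/-! Put `c = (a + 1) / 4`, an inverse of `4` modulo `a`, so `J(c | a) = J(4c | a) = 1`. For odd
`n = 2k + 1`, reciprocity gives `J(a | n) = (-1)^k J(n | a)`, and `4c = a + 1` gives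
`exp(2πi nc/a) = iⁿ exp(πi n/(2a))`; together the `n`-th term on the left is
`-i J(nc | a) exp(2πi nc/a)`. As `k` runs over `0, …, a - 1`, `nc = 2ck + c` runs over all residues
modulo `a` because `2c` is invertible, and the right-hand summand is `a`-periodic and vanishes
at `0`. -/

theorem ZMod.sum_range_natCast {M : Type*} [AddCommMonoid M] (a : ℕ) [NeZero a]
    (f : ZMod a → M) : ∑ k ∈ range a, f k = ∑ x : ZMod a, f x :=
  sum_nbij' (↑) ZMod.val (by simp) (fun x _ => by simpa using x.val_lt)
    (fun k hk => ZMod.val_cast_of_lt (mem_range.mp hk)) (fun x _ => ZMod.natCast_zmod_val x)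
    (fun _ _ => rfl)

theorem Function.Periodic.sum_range_mul_add {M : Type*} [AddCommMonoid M] {g : ℤ → M} {a : ℕ}
    (hg : Periodic g a) {u : ℤ} (hu : IsUnit (u : ZMod a)) (b : ℤ) :
    ∑ k ∈ range a, g (u * k + b) = ∑ k ∈ range a, g k := by
  obtain rfl | ha := eq_or_ne a 0
  · simp
  have : NeZero a := ⟨ha⟩
  set G : ZMod a → M := fun x => g x.val
  have hgG (m : ℤ) : g m = G m := by
    simp only [G, ZMod.val_intCast]
    conv_lhs => rw [← Int.emod_add_mul_ediv m a, mul_comm]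
    exact hg.int_mul _ _
  calc ∑ k ∈ range a, g (u * k + b) = ∑ x : ZMod a, G (hu.unit * x + b) := by
        rw [← ZMod.sum_range_natCast]; simp [hgG]
    _ = ∑ x : ZMod a, G x :=
        (Equiv.sum_comp (Units.mulLeft hu.unit) _).trans (Equiv.sum_comp (Equiv.addRight _) G)
    _ = ∑ k ∈ range a, g k := by rw [← ZMod.sum_range_natCast]; simp [hgG]

theorem jacobiSym.four_mul_left {b : ℕ} (hb : Odd b) (x : ℤ) :
    jacobiSym (4 * x) b = jacobiSym x b := by
  have h2 : Int.gcd 2 b = 1 := by simpa [Int.gcd] using Nat.coprime_two_left.mpr hb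
  rw [jacobiSym.mul_left, show (4 : ℤ) = 2 ^ 2 by norm_num, jacobiSym.sq_one' h2, one_mul]

theorem jacobiSym.eq_neg_one_pow_mul_of_three_mod_four {a : ℕ} (ha : a % 4 = 3) (k : ℕ) :
    jacobiSym a (2 * k + 1) = (-1) ^ k * jacobiSym (2 * k + 1 : ℕ) a := by
  rw [jacobiSym.quadratic_reciprocity (Nat.odd_iff.mpr (by omega)) (odd_two_mul_add_one k),
    mul_comm, pow_mul, ZMod.neg_one_pow_div_two_of_three_mod_four ha, mul_comm]
  congr 2; omega

theorem sum_filter_odd_Icc_eq_sum_range {M : Type*} [AddCommMonoid M] (a : ℕ) (f : ℕ → M) :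
    ∑ n ∈ (Icc 1 (2 * a - 1)).filter Odd, f n = ∑ k ∈ range a, f (2 * k + 1) :=
  sum_nbij' (· / 2) (2 * · + 1)
    (fun n hn => by simp only [mem_filter, mem_Icc, Nat.odd_iff, mem_range] at hn ⊢; omega)
    (fun k hk => by simp only [mem_range, mem_filter, mem_Icc, Nat.odd_iff] at hk ⊢; omega)
    (fun n hn => by simp only [mem_filter, Nat.odd_iff] at hn; omega)
    (fun k _ => by omega) (fun n hn => by
      simp only [mem_filter, Nat.odd_iff] at hn; congr; omega)

theorem sum_range_eq_sum_Icc_of_apply_zero {M : Type*} [AddCommMonoid M] {f : ℕ → M}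
    (h0 : f 0 = 0) (a : ℕ) : ∑ k ∈ range a, f k = ∑ m ∈ Icc 1 (a - 1), f m :=
  (sum_subset (fun m hm => by simp only [mem_Icc, mem_range] at hm ⊢; omega) fun m hm hm' => by
    obtain rfl : m = 0 := by simp only [mem_range, mem_Icc, not_and, not_le] at hm hm'; omega
    exact h0).symm

noncomputable def jacobiGaussTerm (a : ℕ) (m : ℤ) : ℂ :=
  jacobiSym m a * exp (2 * π * I * m / a)

theorem jacobiGaussTerm_periodic (a : ℕ) : Periodic (jacobiGaussTerm a) a := by
  intro m
  obtain rfl | ha := eq_or_ne a 0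
  · simp
  have ha' : (a : ℂ) ≠ 0 := Nat.cast_ne_zero.mpr ha
  have hJ : jacobiSym (m + a) a = jacobiSym m a := jacobiSym.mod_left' (by simp)
  have hexp : exp (2 * π * I * (m + a : ℤ) / a) = exp (2 * π * I * m / a) := by
    rw [show (2 * π * I * (m + a : ℤ) / a : ℂ) = 2 * π * I * m / a + 2 * π * I by
      push_cast; field_simp, exp_add, exp_two_pi_mul_I, mul_one]
  simp only [jacobiGaussTerm, hJ, hexp]

theorem jacobiGaussTerm_zero {a : ℕ} (ha : 1 < a) : jacobiGaussTerm a 0 = 0 := by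
  simp [jacobiGaussTerm, jacobiSym.zero_left ha]

theorem exp_two_pi_I_mul_div_of_four_mul_eq {a c : ℕ} (ha : a ≠ 0) (hc : 4 * c = a + 1) (n : ℕ) :
    exp (2 * π * I * (n * c) / a) = I ^ n * exp (π * I * n / (2 * a)) := by
  have hcC : (4 * c : ℂ) = a + 1 := by exact_mod_cast hc
  have ha' : (a : ℂ) ≠ 0 := Nat.cast_ne_zero.mpr ha
  have hsplit : 2 * π * I * (n * c) / a = n * (π / 2 * I) + π * I * n / (2 * a) := by
    rw [show (2 * π * I * (n * c) / a : ℂ) = π * I * n * (4 * c) / (2 * a) by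
      field_simp; ring, hcC]
    field_simp
  rw [hsplit, exp_add, exp_nat_mul, exp_pi_div_two_mul_I]

theorem jacobiSym_mul_exp_eq_neg_I_mul_jacobiGaussTerm {a c : ℕ} (ha : a % 4 = 3)
    (hc : 4 * c = a + 1) (k : ℕ) :
    (jacobiSym a (2 * k + 1) : ℂ) * exp (π * I * (2 * k + 1 : ℕ) / (2 * a)) =
      -I * jacobiGaussTerm a (2 * c * k + c) := by
  have hcZ : (4 * c : ℤ) = a + 1 := by exact_mod_cast hc
  have hJ : jacobiSym (2 * c * k + c) a = jacobiSym (2 * k + 1 : ℕ) a := by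
    rw [← jacobiSym.four_mul_left (Nat.odd_iff.mpr (by omega))]
    refine jacobiSym.mod_left' ?_
    rw [show (4 * (2 * c * k + c) : ℤ) = (2 * k + 1 : ℕ) + a * (2 * k + 1) by
      push_cast; linear_combination (2 * (k : ℤ) + 1) * hcZ]
    exact Int.add_mul_emod_self_left _ _ _
  have hexp := exp_two_pi_I_mul_div_of_four_mul_eq (by omega) hc (2 * k + 1)
  rw [jacobiGaussTerm, hJ, jacobiSym.eq_neg_one_pow_mul_of_three_mod_four ha]
  push_cast at hexp ⊢
  have hI : -I * I ^ (2 * k + 1) = (-1) ^ k := by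
    rw [pow_succ', ← mul_assoc, neg_mul, I_mul_I, neg_neg, one_mul, pow_mul, I_sq]
  rw [show (2 * c * k + c : ℂ) = (2 * k + 1) * c by ring, hexp, ← hI]
  ring

theorem fbar_eq_neg_i_gauss_general (a : ℕ) (ha3 : a % 4 = 3) :
    ∑ n ∈ (Finset.Icc 1 (2 * a - 1)).filter (fun n => Odd n),
        (jacobiSym (a : ℤ) n : ℂ) * Complex.exp (Real.pi * Complex.I * n / (2 * a))
      = -Complex.I * ∑ m ∈ Finset.Icc 1 (a - 1),
          (jacobiSym (m : ℤ) a : ℂ) * Complex.exp (2 * Real.pi * Complex.I * m / a) := by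
  obtain ⟨c, hc⟩ : ∃ c, 4 * c = a + 1 := ⟨(a + 1) / 4, by omega⟩
  have hunit : IsUnit ((2 * c : ℤ) : ZMod a) := by
    refine IsUnit.of_mul_eq_one 2 ?_
    have : ((4 * c : ℕ) : ZMod a) = ((a + 1 : ℕ) : ZMod a) := by rw [hc]
    push_cast at this ⊢
    rw [ZMod.natCast_self, zero_add] at this
    linear_combination this
  calc _ = ∑ k ∈ range a, (jacobiSym a (2 * k + 1) : ℂ) *
          exp (π * I * (2 * k + 1 : ℕ) / (2 * a)) :=
        sum_filter_odd_Icc_eq_sum_range a _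
    _ = -I * ∑ k ∈ range a, jacobiGaussTerm a (2 * c * k + c) := by
        rw [mul_sum]
        exact sum_congr rfl fun k _ => jacobiSym_mul_exp_eq_neg_I_mul_jacobiGaussTerm ha3 hc k
    _ = -I * ∑ k ∈ range a, jacobiGaussTerm a k := by
        rw [(jacobiGaussTerm_periodic a).sum_range_mul_add hunit]
    _ = _ := by
        rw [sum_range_eq_sum_Icc_of_apply_zero (jacobiGaussTerm_zero (by omega))]
        simp [jacobiGaussTerm]

/-- For a positive integer `a ≡ 3 (mod 4)`,
`Σ_{n odd, 1 ≤ n ≤ 2a−1} (a/n)·exp(πi·n/(2a)) = −i · Σ_{m=1}^{a−1} (m/a)·exp(2πi·m/a)`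
in `ℂ`, where `(·/·)` denotes the Jacobi symbol. -/
theorem fbar_eq_neg_i_gauss (a : ℕ) (ha : 0 < a) (ha3 : a % 4 = 3) :
    ∑ n ∈ (Finset.Icc 1 (2 * a - 1)).filter (fun n => Odd n),
        (jacobiSym (a : ℤ) n : ℂ) * Complex.exp (Real.pi * Complex.I * n / (2 * a))
      = -Complex.I * ∑ m ∈ Finset.Icc 1 (a - 1),
          (jacobiSym (m : ℤ) a : ℂ) * Complex.exp (2 * Real.pi * Complex.I * m / a) :=
  fbar_eq_neg_i_gauss_general a ha3
end
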